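/- arXiv:1604.07350 — 2 statements merged into one kernel-verified Lean document; each statement's English description precedes it below -/
import Mathlib

section
/- Let (a_n)_{n ≥ 1} be a sequence of real numbers that is strictly increasing (a_n < a_{n+1} for all n ≥ 1) and satisfies a_{mn} = a_m · a_n for all positive integers m, n. Then there exists a real k > 0 such that a_n = n^k for every positive integer n. -/
theorem stmt14 (a : ℕ → ℝ)
    (hmono : ∀ n : ℕ, 1 ≤ n → a n < a (n + 1))
    (hmul : ∀ m n : ℕ, 1 ≤ m → 1 ≤ n → a (m * n) = a m * a n) :
    ∃ k : ℝ, 0 < k ∧ ∀ n : ℕ, 1 ≤ n → a n = (n : ℝ) ^ k := by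
  -- strict monotonicity on [1, ∞)
  have hb : StrictMono (fun n : ℕ => a (n + 1)) :=
    strictMono_nat_of_lt_succ (fun n => hmono (n + 1) (by omega))
  have hlt : ∀ m n : ℕ, 1 ≤ m → m < n → a m < a n := by
    intro m n hm hmn
    obtain ⟨m', rfl⟩ : ∃ m', m = m' + 1 := ⟨m - 1, by omega⟩
    obtain ⟨n', rfl⟩ : ∃ n', n = n' + 1 := ⟨n - 1, by omega⟩
    exact hb (by omega)
  have hle : ∀ m n : ℕ, 1 ≤ m → m ≤ n → a m ≤ a n := by
    intro m n hm hmn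
    rcases eq_or_lt_of_le hmn with h | h
    · rw [h]
    · exact le_of_lt (hlt m n hm h)
  have h11 : a 1 = a 1 * a 1 := by simpa using hmul 1 1 le_rfl le_rfl
  have h12 : a 1 < a 2 := hmono 1 le_rfl
  have h21 : a 2 = a 2 * a 1 := by
    have := hmul 2 1 (by norm_num) le_rfl
    simpa using this
  have ha1 : a 1 = 1 := by
    rcases eq_or_ne (a 1) 0 with h | h
    · exfalso; rw [h] at h21 h12; simp at h21; rw [h21] at h12; linarith
    · have : a 1 * 1 = a 1 * a 1 := by linarith
      exact (mul_left_cancel₀ h this).symm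
  -- a n > 1 for n ≥ 2
  have hgt1 : ∀ n : ℕ, 2 ≤ n → 1 < a n := by
    intro n hn
    have := hlt 1 n le_rfl (by omega)
    linarith [ha1 ▸ this]
  -- powers
  have hpow : ∀ n : ℕ, 1 ≤ n → ∀ j : ℕ, a (n ^ j) = (a n) ^ j := by
    intro n hn j
    induction j with
    | zero => simpa using ha1
    | succ j ih =>
      rw [pow_succ, pow_succ, hmul _ _ (Nat.one_le_pow j n hn) hn, ih]
  -- key contradiction lemma
  have key : ∀ m n : ℕ, 2 ≤ m → 2 ≤ n →
      ¬ (Real.log (a m) * Real.log n < Real.log (a n) * Real.log m) := by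
    intro m n hm hn hctr
    have ham : (0:ℝ) < Real.log (a m) := Real.log_pos (hgt1 m hm)
    have han : (0:ℝ) < Real.log (a n) := Real.log_pos (hgt1 n hn)
    have hlm : (0:ℝ) < Real.log m := Real.log_pos (by exact_mod_cast hm)
    have hln : (0:ℝ) < Real.log n := Real.log_pos (by exact_mod_cast hn)
    have hdiv : Real.log (a m) / Real.log (a n) < Real.log m / Real.log n := by
      rw [div_lt_div_iff₀ han hln]
      linarith [mul_comm (Real.log (a n)) (Real.log m)]
    obtain ⟨r, hr1, hr2⟩ := exists_rat_btwn hdiv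
    have hr0 : (0:ℚ) < r := by
      have : (0:ℝ) < (r:ℝ) := lt_trans (div_pos ham han) hr1
      exact_mod_cast this
    have hnum : (0:ℤ) < r.num := Rat.num_pos.mpr hr0
    set p : ℕ := r.num.toNat with hp
    set q : ℕ := r.den with hq
    have hpp : 0 < p := by omega
    have hqp : 0 < q := r.pos
    have hqR : (0:ℝ) < (q:ℝ) := by exact_mod_cast hqp
    have hrcast : (r:ℝ) = (p:ℝ) / (q:ℝ) := by
      rw [Rat.cast_def]
      congr 1
      exact_mod_cast (Int.toNat_of_nonneg hnum.le).symm
    rw [hrcast] at hr1 hr2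
    -- Step A : (a m)^q < (a n)^p
    have hA : (a m) ^ q < (a n) ^ p := by
      have h1 := (div_lt_div_iff₀ han hqR).mp hr1
      have h2 : Real.log ((a m) ^ q) < Real.log ((a n) ^ p) := by
        rw [Real.log_pow, Real.log_pow]
        push_cast
        linarith [mul_comm (Real.log (a m)) ((q:ℝ))]
      exact (Real.log_lt_log_iff (pow_pos (by linarith [hgt1 m hm]) q)
        (pow_pos (by linarith [hgt1 n hn]) p)).mp h2
    -- Step B : n^p ≤ m^q (naturals), so (a n)^p ≤ (a m)^q
    have hB : (n:ℝ) ^ p < (m:ℝ) ^ q := by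
      have h1 := (div_lt_div_iff₀ hqR hln).mp hr2
      have h2 : Real.log ((n:ℝ) ^ p) < Real.log ((m:ℝ) ^ q) := by
        rw [Real.log_pow, Real.log_pow]
        push_cast
        linarith [mul_comm (Real.log m) ((q:ℝ))]
      exact (Real.log_lt_log_iff (pow_pos (by positivity) p)
        (pow_pos (by positivity) q)).mp h2
    have hBn : n ^ p < m ^ q := by exact_mod_cast hB
    have hAB : a (n ^ p) ≤ a (m ^ q) :=
      hle _ _ (Nat.one_le_pow p n (by omega)) hBn.le
    rw [hpow n (by omega) p, hpow m (by omega) q] at hAB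
    linarith
  -- the exponent
  refine ⟨Real.log (a 2) / Real.log 2, ?_, ?_⟩
  · exact div_pos (Real.log_pos (hgt1 2 le_rfl)) (Real.log_pos one_lt_two)
  · intro n hn
    rcases eq_or_lt_of_le hn with h | h
    · rw [← h, ha1]; norm_num
    · have hn2 : 2 ≤ n := h
      have k1 := key 2 n le_rfl hn2
      have k2 := key n 2 hn2 le_rfl
      have heq : Real.log (a n) * Real.log 2 = Real.log (a 2) * Real.log n := by
        have c2 : Real.log ((2:ℕ):ℝ) = Real.log 2 := by norm_num
        rw [c2] at k1 k2
        push_neg at k1 k2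
        linarith
      have hln : (0:ℝ) < Real.log n := Real.log_pos (by exact_mod_cast hn2)
      have hl2 : (0:ℝ) < Real.log 2 := Real.log_pos one_lt_two
      have hanp : (0:ℝ) < a n := lt_trans one_pos (hgt1 n hn2)
      rw [Real.rpow_def_of_pos (by positivity : (0:ℝ) < (n:ℝ))]
      rw [← Real.exp_log hanp]
      congr 1
      field_simp
      linarith
end

section
/- Let μ be a non-degenerate stable probability measure on ℝ with characteristic function φ, and suppose α > 0 is such that for every positive integer n there exists b_n ∈ ℝ with φ(t)^n = φ(n^{1/α} t)·exp(i b_n t) for all real t. Then α ≤ 2. -/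
open MeasureTheory Complex Filter

section Aux
open Topology
open scoped ENNReal

lemma trig_lb {y : ℝ} (hy : |y| ≤ 1) : y ^ 2 / 3 ≤ 1 - Real.cos y := by
  wlog h : 0 ≤ y generalizing y
  · have := this (y := -y) (by simpa using hy) (by linarith [not_le.mp h])
    simpa using this
  rcases eq_or_lt_of_le h with h0 | h0
  · simp [← h0]
  · have hy1 : y ≤ 1 := by rwa [_root_.abs_of_nonneg h] at hy
    have h2 : 0 < y / 2 := by linarith
    have h21 : y / 2 ≤ 1 := by linarith
    have hs : y / 2 - (y / 2) ^ 3 / 4 < Real.sin (y / 2) := by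
      have := Real.sin_gt_sub_cube h2; linarith [pow_pos h2 3]
    have hcos : Real.cos y = 1 - 2 * Real.sin (y / 2) ^ 2 := by
      have h1 := Real.cos_two_mul (y / 2)
      have h2' := Real.cos_sq' (y / 2)
      have h2y : 2 * (y / 2) = y := by ring
      rw [h2y] at h1
      nlinarith
    have hsp : 0 ≤ Real.sin (y / 2) := Real.sin_nonneg_of_nonneg_of_le_pi (by linarith)
      (by nlinarith [Real.pi_gt_three])
    have hzz : (y / 2) * (y / 2) ≤ y / 2 := mul_le_of_le_one_right h2.le h21
    have hnn : 0 ≤ y / 2 - (y / 2) ^ 3 / 4 := by nlinarith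
    have hsq : (y / 2 - (y / 2) ^ 3 / 4) ^ 2 ≤ Real.sin (y / 2) ^ 2 := by
      have := mul_self_le_mul_self hnn hs.le
      nlinarith
    nlinarith [sq_nonneg ((y/2)^2), sq_nonneg (y/2 - (y/2)^2)]

set_option maxHeartbeats 1000000 in
lemma core (ν : Measure ℝ) [IsProbabilityMeasure ν] {α : ℝ} (hα : 2 < α)
    {F : ℝ → ℝ} (hFdef : ∀ t, F t = ∫ x, Real.cos (t * x) ∂ν)
    (heq : ∀ n : ℕ, 0 < n → ∀ t : ℝ, F t ^ n = F ((n : ℝ) ^ (1 / α) * t))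
    {t1 : ℝ} (ht1 : 0 < t1) (hFt1 : F t1 < 1) : False := by
  have hαpos : (0:ℝ) < α := by linarith
  set a : ℕ → ℝ := fun n => (n : ℝ) ^ (1 / α) with ha_def
  have hint : ∀ t : ℝ, Integrable (fun x => Real.cos (t * x)) ν := fun t =>
    (integrable_const (1:ℝ)).mono'
      ((Real.continuous_cos.comp (continuous_const.mul continuous_id)).aestronglyMeasurable)
      (ae_of_all _ fun x => by simpa using Real.abs_cos_le_one (t * x))
  have hgint : ∀ t : ℝ, Integrable (fun x => 1 - Real.cos (t * x)) ν := fun t =>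
    (integrable_const (1:ℝ)).sub (hint t)
  have hsub : ∀ t : ℝ, 1 - F t = ∫ x, (1 - Real.cos (t * x)) ∂ν := by
    intro t
    rw [hFdef t, integral_sub (integrable_const 1) (hint t)]
    simp
  have hgnn : ∀ t x : ℝ, 0 ≤ 1 - Real.cos (t * x) := fun t x => by
    linarith [Real.cos_le_one (t * x)]
  -- tail bound
  obtain ⟨R, hR⟩ : ∃ R : ℕ, ENNReal.ofReal (7/8) < ν (Metric.closedBall 0 R) := by
    have hmono : Monotone (fun n : ℕ => Metric.closedBall (0:ℝ) n) := fun m n hmn =>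
      Metric.closedBall_subset_closedBall (by exact_mod_cast hmn)
    have hun : ⋃ n : ℕ, Metric.closedBall (0:ℝ) n = Set.univ := by
      ext x
      simp only [Set.mem_iUnion, Metric.mem_closedBall, Real.dist_eq, sub_zero, Set.mem_univ,
        iff_true]
      exact exists_nat_ge |x|
    have htd := tendsto_measure_iUnion_atTop (μ := ν) hmono
    rw [hun, measure_univ] at htd
    exact (htd.eventually (lt_mem_nhds (by norm_num : ENNReal.ofReal (7/8) < 1))).exists
  set R' : ℝ := (R : ℝ) + 1 with hR'_def
  clear_value R'
  have hR'pos : (0:ℝ) < R' := by rw [hR'_def]; positivity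
  set B : Set ℝ := Metric.closedBall 0 R' with hB_def
  have hBmeas : MeasurableSet B := measurableSet_closedBall
  have hνB : ENNReal.ofReal (7/8) < ν B :=
    hR.trans_le (measure_mono (Metric.closedBall_subset_closedBall (by linarith [le_refl (R:ℝ)])))
  have htail : (ν Bᶜ).toReal ≤ 1/8 := by
    have hc : ν Bᶜ ≤ ENNReal.ofReal (1/8) := by
      rw [measure_compl hBmeas (measure_ne_top ν _), measure_univ]
      rw [tsub_le_iff_right]
      calc (1 : ℝ≥0∞) = ENNReal.ofReal (1/8) + ENNReal.ofReal (7/8) := by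
            rw [← ENNReal.ofReal_add (by norm_num) (by norm_num)]; norm_num
        _ ≤ ENNReal.ofReal (1/8) + ν B := by gcongr
    calc (ν Bᶜ).toReal ≤ (ENNReal.ofReal (1/8)).toReal :=
          ENNReal.toReal_mono ENNReal.ofReal_ne_top hc
      _ = 1/8 := by rw [ENNReal.toReal_ofReal]; norm_num
  set δ : ℝ := 1 / (2 * R') with hδ_def
  clear_value δ
  have hδpos : 0 < δ := by rw [hδ_def]; positivity
  -- near-zero positivity
  have hhalf : ∀ u : ℝ, 0 < u → u ≤ δ → 1/2 ≤ F u := by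
    intro u hu hud
    have hsplit : 1 - F u = (∫ x in B, (1 - Real.cos (u * x)) ∂ν)
        + ∫ x in Bᶜ, (1 - Real.cos (u * x)) ∂ν := by
      rw [hsub u, ← integral_add_compl hBmeas (hgint u)]
    have h1 : ∫ x in B, (1 - Real.cos (u * x)) ∂ν ≤ 1/8 := by
      have hb := norm_setIntegral_le_of_norm_le_const (μ := ν) (s := B)
        (f := fun x => 1 - Real.cos (u * x)) (C := 1/8) (measure_lt_top ν B) ?_
      · refine (le_abs_self _).trans (hb.trans ?_)
        have : (ν B).toReal ≤ 1 := by
          rw [← ENNReal.toReal_one]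
          exact ENNReal.toReal_mono ENNReal.one_ne_top prob_le_one
        change 1/8 * (ν B).toReal ≤ 1/8
        nlinarith
      · intro x hx
        rw [Metric.mem_closedBall, Real.dist_eq, sub_zero] at hx
        have hle : 1 - Real.cos (u * x) ≤ (u * x)^2 / 2 := by
          linarith [Real.one_sub_sq_div_two_le_cos (x := u * x)]
        have habs : |u * x| ≤ u * R' := by
          rw [abs_mul, _root_.abs_of_nonneg hu.le]
          exact mul_le_mul_of_nonneg_left hx hu.le
        have hux : (u * x)^2 ≤ (u * R')^2 := by
          calc (u*x)^2 = |u*x|^2 := (_root_.sq_abs _).symm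
            _ ≤ (u*R')^2 := by nlinarith [abs_nonneg (u*x)]
        have huR : u * R' ≤ 1/2 := by
          rw [hδ_def] at hud
          have h2R := (le_div_iff₀ (by positivity : (0:ℝ) < 2 * R')).mp hud
          nlinarith
        have hq : (u * R') ^ 2 ≤ (1/2 : ℝ)^2 :=
          pow_le_pow_left₀ (mul_nonneg hu.le hR'pos.le) huR 2
        rw [Real.norm_eq_abs, _root_.abs_of_nonneg (hgnn u x)]
        norm_num at hq ⊢
        linarith [hle, hux, hq]
    have h2 : ∫ x in Bᶜ, (1 - Real.cos (u * x)) ∂ν ≤ 1/4 := by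
      have hb := norm_setIntegral_le_of_norm_le_const (μ := ν) (s := Bᶜ)
        (f := fun x => 1 - Real.cos (u * x)) (C := 2) (measure_lt_top ν Bᶜ) ?_
      · refine (le_abs_self _).trans (hb.trans ?_)
        change 2 * (ν Bᶜ).toReal ≤ 1/4
        nlinarith [htail, ENNReal.toReal_nonneg (a := ν Bᶜ)]
      · intro x _
        rw [Real.norm_eq_abs, _root_.abs_of_nonneg (hgnn u x)]
        linarith [Real.neg_one_le_cos (u * x)]
    linarith
  -- F ≤ 1
  have hFle : ∀ t, F t ≤ 1 := by
    intro t
    rw [hFdef t]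
    calc ∫ x, Real.cos (t*x) ∂ν ≤ ∫ _x, (1:ℝ) ∂ν :=
          integral_mono (hint t) (integrable_const 1) fun x => Real.cos_le_one _
      _ = 1 := by simp
  have heq' : ∀ n : ℕ, 0 < n → ∀ t : ℝ, F t ^ n = F (a n * t) := by
    intro n hn t
    simpa only [ha_def] using heq n hn t
  clear_value a
  have hapos : ∀ n : ℕ, 0 < n → 0 < a n := by
    intro n hn
    simp only [ha_def]
    exact Real.rpow_pos_of_pos (by exact_mod_cast hn) _
  have haone : ∀ n : ℕ, 0 < n → 1 ≤ a n := by
    intro n hn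
    simp only [ha_def]
    exact Real.one_le_rpow (by exact_mod_cast hn) (by positivity)
  have ta : Tendsto a atTop atTop := by
    rw [ha_def]
    exact (tendsto_rpow_atTop (by positivity : (0:ℝ) < 1/α)).comp tendsto_natCast_atTop_atTop
  -- integrability of x^2 on balls
  have hJint : ∀ r : ℝ, IntegrableOn (fun x : ℝ => x ^ 2) (Metric.closedBall 0 r) ν := by
    intro r
    refine Integrable.mono' (integrable_const (r ^ 2))
      ((continuous_pow 2).aestronglyMeasurable) ?_
    filter_upwards [ae_restrict_mem measurableSet_closedBall] with x hx
    rw [Metric.mem_closedBall, Real.dist_eq, sub_zero] at hx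
    have h1 : |x| ≤ |r| := hx.trans (le_abs_self r)
    calc ‖x ^ 2‖ = |x| ^ 2 := by rw [Real.norm_eq_abs, _root_.abs_pow]
      _ ≤ |r| ^ 2 := pow_le_pow_left₀ (abs_nonneg x) h1 2
      _ = r ^ 2 := _root_.sq_abs r
  -- anchor point
  obtain ⟨m, hmge, hm1⟩ := ((ta.eventually_ge_atTop (t1/δ)).and (eventually_ge_atTop 1)).exists
  have hm0 : 0 < m := hm1
  have ham := hapos m hm0
  set s0 : ℝ := t1 / a m with hs0_def
  clear_value s0
  have hs0pos : 0 < s0 := by rw [hs0_def]; positivity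
  have hs0δ : s0 ≤ δ := by
    rw [hs0_def, div_le_iff₀ ham]
    have h := (div_le_iff₀ hδpos).mp hmge
    nlinarith
  have hams0 : a m * s0 = t1 := by
    rw [hs0_def, mul_comm, div_mul_cancel₀ _ ham.ne']
  have hFs0half : 1/2 ≤ F s0 := hhalf s0 hs0pos hs0δ
  have hFs0lt : F s0 < 1 := by
    by_contra hcon
    push_neg at hcon
    have h := heq' m hm0 s0
    rw [hams0] at h
    have h1 : (1:ℝ) ≤ F s0 ^ m := one_le_pow₀ hcon
    rw [h] at h1
    linarith
  set L : ℝ := -Real.log (F s0) with hL_def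
  clear_value L
  have hLpos : 0 < L := by
    have := Real.log_neg (by linarith) hFs0lt
    rw [hL_def]; linarith
  -- decay
  have hdecay : ∀ n : ℕ, 0 < n → (n:ℝ) * (1 - F (s0 / a n)) ≤ L := by
    intro n hn
    have han := hapos n hn
    have han1 := haone n hn
    have hupos : 0 < s0 / a n := by positivity
    have huδ : s0 / a n ≤ δ := le_trans (div_le_self hs0pos.le han1) hs0δ
    have hFu : 1/2 ≤ F (s0 / a n) := hhalf _ hupos huδ
    have hpow : F (s0 / a n) ^ n = F s0 := by
      have h := heq' n hn (s0 / a n)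
      rwa [mul_comm, div_mul_cancel₀ _ han.ne'] at h
    have hlog : Real.log (F (s0/a n)) ≤ F (s0/a n) - 1 :=
      Real.log_le_sub_one_of_pos (by linarith)
    have hlp : (n:ℝ) * Real.log (F (s0/a n)) = -L := by
      rw [← Real.log_pow, hpow, hL_def, neg_neg]
    have hnn : (0:ℝ) ≤ n := Nat.cast_nonneg n
    have := mul_le_mul_of_nonneg_left hlog hnn
    nlinarith
  -- second moment bound
  have hmom : ∀ n : ℕ, 0 < n →
      ∫ x in Metric.closedBall (0:ℝ) (a n / s0), x^2 ∂ν ≤ 3 * L / ((n:ℝ) * (s0 / a n)^2) := by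
    intro n hn
    have han := hapos n hn
    have hupos : 0 < s0 / a n := by positivity
    have step2 : ∫ x in Metric.closedBall (0:ℝ) (a n / s0), ((s0/a n)^2/3) * x^2 ∂ν
        ≤ ∫ x in Metric.closedBall (0:ℝ) (a n / s0), (1 - Real.cos ((s0/a n)*x)) ∂ν := by
      refine setIntegral_mono_on ((hJint _).const_mul _) ((hgint _).integrableOn)
        measurableSet_closedBall ?_
      intro x hx
      rw [Metric.mem_closedBall, Real.dist_eq, sub_zero] at hx
      have habs : |(s0/a n) * x| ≤ 1 := by
        rw [abs_mul, _root_.abs_of_nonneg hupos.le]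
        calc s0/a n * |x| ≤ s0/a n * (a n / s0) :=
              mul_le_mul_of_nonneg_left hx hupos.le
          _ = 1 := by field_simp
      have := trig_lb habs
      calc ((s0/a n)^2/3) * x^2 = ((s0/a n) * x)^2/3 := by ring
        _ ≤ 1 - Real.cos ((s0/a n)*x) := this
    have step1 : ∫ x in Metric.closedBall (0:ℝ) (a n / s0), (1 - Real.cos ((s0/a n)*x)) ∂ν
        ≤ 1 - F (s0/a n) := by
      rw [hsub (s0/a n)]
      exact setIntegral_le_integral (hgint _) (ae_of_all _ (hgnn _))
    have step3 : ∫ x in Metric.closedBall (0:ℝ) (a n / s0), ((s0/a n)^2/3) * x^2 ∂ν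
        = ((s0/a n)^2/3) * ∫ x in Metric.closedBall (0:ℝ) (a n / s0), x^2 ∂ν :=
      MeasureTheory.integral_const_mul _ _
    have hJnn : 0 ≤ ∫ x in Metric.closedBall (0:ℝ) (a n / s0), x^2 ∂ν :=
      setIntegral_nonneg measurableSet_closedBall fun x _ => sq_nonneg x
    have hd := hdecay n hn
    have hnpos : (0:ℝ) < n := by exact_mod_cast hn
    rw [le_div_iff₀ (by positivity)]
    rw [step3] at step2
    nlinarith [mul_le_mul_of_nonneg_left (step2.trans step1) hnpos.le]
  -- truncated second moments vanish
  have hJzero : ∀ r : ℝ, ∫ x in Metric.closedBall (0:ℝ) r, x^2 ∂ν = 0 := by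
    intro r
    have hnn : 0 ≤ ∫ x in Metric.closedBall (0:ℝ) r, x^2 ∂ν :=
      setIntegral_nonneg measurableSet_closedBall fun x _ => sq_nonneg x
    by_contra hne
    have hpos : 0 < ∫ x in Metric.closedBall (0:ℝ) r, x^2 ∂ν := lt_of_le_of_ne hnn (Ne.symm hne)
    have td0 : Tendsto (fun n : ℕ => (n:ℝ) ^ (2/α - 1)) atTop (𝓝 0) := by
      have he : (2/α - 1) = -(1 - 2/α) := by ring
      have h2α : 0 < 1 - 2/α := by
        have : 2/α < 1 := (div_lt_one hαpos).mpr hα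
        linarith
      rw [he]
      exact (tendsto_rpow_neg_atTop h2α).comp tendsto_natCast_atTop_atTop
    have td : Tendsto (fun n : ℕ => (3*L/s0^2) * (n:ℝ)^(2/α-1)) atTop (𝓝 0) := by
      simpa using td0.const_mul (3*L/s0^2)
    have hev1 : ∀ᶠ n : ℕ in atTop, (3*L/s0^2) * (n:ℝ)^(2/α-1)
        < ∫ x in Metric.closedBall (0:ℝ) r, x^2 ∂ν := td.eventually (gt_mem_nhds hpos)
    have hev2 := ta.eventually_ge_atTop (r * s0)
    obtain ⟨n, hn1, hn2, hn3⟩ := (hev1.and (hev2.and (eventually_gt_atTop 0))).exists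
    have han := hapos n hn3
    have hkr : r ≤ a n / s0 := (le_div_iff₀ hs0pos).mpr hn2
    have hJk : ∫ x in Metric.closedBall (0:ℝ) r, x^2 ∂ν
        ≤ ∫ x in Metric.closedBall (0:ℝ) (a n / s0), x^2 ∂ν :=
      setIntegral_mono_set (hJint _) (ae_of_all _ fun x => sq_nonneg x)
        ((Metric.closedBall_subset_closedBall hkr).eventuallyLE)
    have ha2 : (a n)^2 = (n:ℝ)^(2/α) := by
      rw [ha_def]
      rw [← Real.rpow_natCast ((n:ℝ)^(1/α)) 2, ← Real.rpow_mul (Nat.cast_nonneg n)]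
      congr 1
      push_cast
      ring
    have hnα : (n:ℝ)^(2/α - 1) = (n:ℝ)^(2/α) / n := by
      rw [Real.rpow_sub (by exact_mod_cast hn3), Real.rpow_one]
    have heval : 3 * L / ((n:ℝ) * (s0 / a n)^2) = (3*L/s0^2) * (n:ℝ)^(2/α-1) := by
      have hnpos : (0:ℝ) < n := by exact_mod_cast hn3
      rw [hnα, ← ha2]
      field_simp
    have := (hJk.trans (hmom n hn3)).trans_lt (heval ▸ hn1)
    exact lt_irrefl _ this
  -- the measure is concentrated at 0
  have hnull : ν {x : ℝ | x ≠ 0} = 0 := by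
    have hsub2 : {x : ℝ | x ≠ 0} ⊆
        ⋃ k : ℕ, ({x : ℝ | 1/((k:ℝ)+1) ≤ |x|} ∩ Metric.closedBall 0 ((k:ℝ)+1)) := by
      intro x hx
      have hxpos : 0 < |x| := abs_pos.mpr hx
      obtain ⟨k, hk⟩ := exists_nat_ge (max (1/|x|) |x|)
      refine Set.mem_iUnion.mpr ⟨k, ?_, ?_⟩
      · have h1 : 1/|x| ≤ (k:ℝ)+1 := le_trans (le_max_left _ _) (by linarith)
        have h2 : 1 ≤ ((k:ℝ)+1) * |x| := (div_le_iff₀ hxpos).mp h1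
        rw [Set.mem_setOf_eq, div_le_iff₀ (by positivity)]
        nlinarith
      · rw [Metric.mem_closedBall, Real.dist_eq, sub_zero]
        linarith [le_trans (le_max_right (1/|x|) |x|) hk]
    refine measure_mono_null hsub2 (measure_iUnion_null fun k => ?_)
    have hTmeas1 : MeasurableSet {x : ℝ | 1/((k:ℝ)+1) ≤ |x|} :=
      (isClosed_le continuous_const _root_.continuous_abs).measurableSet
    have hTm := hTmeas1.inter (measurableSet_closedBall
      (x := (0:ℝ)) (ε := (k:ℝ)+1))
    have hTsub : {x : ℝ | 1/((k:ℝ)+1) ≤ |x|} ∩ Metric.closedBall 0 ((k:ℝ)+1)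
        ⊆ Metric.closedBall (0:ℝ) ((k:ℝ)+1) := Set.inter_subset_right
    have hint1 : IntegrableOn (fun x:ℝ => x^2)
        ({x : ℝ | 1/((k:ℝ)+1) ≤ |x|} ∩ Metric.closedBall 0 ((k:ℝ)+1)) ν :=
      (hJint _).mono_set hTsub
    have hlow : ∀ x ∈ {x : ℝ | 1/((k:ℝ)+1) ≤ |x|} ∩ Metric.closedBall 0 ((k:ℝ)+1),
        (1/((k:ℝ)+1))^2 ≤ x^2 := by
      intro x hx
      calc (1/((k:ℝ)+1))^2 ≤ |x|^2 := pow_le_pow_left₀ (by positivity) hx.1 2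
        _ = x^2 := _root_.sq_abs x
    have hconst : (ν ({x : ℝ | 1/((k:ℝ)+1) ≤ |x|} ∩ Metric.closedBall 0 ((k:ℝ)+1))).toReal
        * (1/((k:ℝ)+1))^2
        ≤ ∫ x in {x : ℝ | 1/((k:ℝ)+1) ≤ |x|} ∩ Metric.closedBall 0 ((k:ℝ)+1), x^2 ∂ν := by
      have h := setIntegral_mono_on (integrableOn_const (measure_ne_top ν _))
        hint1 hTm hlow
      rwa [setIntegral_const, smul_eq_mul] at h
    have hup : ∫ x in {x : ℝ | 1/((k:ℝ)+1) ≤ |x|} ∩ Metric.closedBall 0 ((k:ℝ)+1), x^2 ∂ν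
        ≤ 0 := by
      exact le_of_le_of_eq (setIntegral_mono_set (hJint _)
        (ae_of_all _ fun x => sq_nonneg x) hTsub.eventuallyLE) (hJzero ((k:ℝ)+1))
    have htr : (ν ({x : ℝ | 1/((k:ℝ)+1) ≤ |x|} ∩ Metric.closedBall 0 ((k:ℝ)+1))).toReal = 0 := by
      have hcp : (0:ℝ) < (1/((k:ℝ)+1))^2 := by positivity
      nlinarith [ENNReal.toReal_nonneg
        (a := ν ({x : ℝ | 1/((k:ℝ)+1) ≤ |x|} ∩ Metric.closedBall 0 ((k:ℝ)+1)))]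
    exact ((ENNReal.toReal_eq_zero_iff _).mp htr).resolve_right (measure_ne_top ν _)
  have hae : ∀ᵐ x ∂ν, x = (0:ℝ) := by
    rw [ae_iff]
    simpa using hnull
  have hFone : F t1 = 1 := by
    rw [hFdef]
    have hcg : (fun x => Real.cos (t1 * x)) =ᵐ[ν] fun _ => (1:ℝ) :=
      hae.mono fun x hx => by simp [hx]
    rw [integral_congr_ae hcg]
    simp
  linarith

end Aux

/-- The characteristic function of a measure on ℝ. -/
noncomputable def charFun' (μ : Measure ℝ) (t : ℝ) : ℂ :=
  ∫ x, Complex.exp (Complex.I * t * x) ∂μ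

set_option maxHeartbeats 1000000 in
theorem stmt15 (μ : Measure ℝ) [IsProbabilityMeasure μ]
    (hnd : ∃ t : ℝ, ‖charFun' μ t‖ < 1)
    (α : ℝ) (hα : 0 < α)
    (hstable : ∀ n : ℕ, 0 < n → ∃ b : ℝ, ∀ t : ℝ,
      (charFun' μ t) ^ n =
        charFun' μ ((n : ℝ) ^ (1 / α) * t) * Complex.exp (Complex.I * b * t)) :
    α ≤ 2 := by
  by_contra hcon
  push_neg at hcon
  have hexp_int : ∀ t : ℝ, Integrable (fun x : ℝ => Complex.exp (Complex.I * t * x)) μ := by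
    intro t
    refine (integrable_const (1:ℝ)).mono'
      ((Complex.continuous_exp.comp (by continuity)).aestronglyMeasurable)
      (ae_of_all _ fun x => ?_)
    rw [Complex.norm_exp]
    simp
  have hcosμ : ∀ t : ℝ, Integrable (fun x => Real.cos (t * x)) μ := fun t =>
    (integrable_const (1:ℝ)).mono'
      ((Real.continuous_cos.comp (continuous_const.mul continuous_id)).aestronglyMeasurable)
      (ae_of_all _ fun x => by simpa using Real.abs_cos_le_one (t * x))
  have hsinμ : ∀ t : ℝ, Integrable (fun x => Real.sin (t * x)) μ := fun t =>
    (integrable_const (1:ℝ)).mono'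
      ((Real.continuous_sin.comp (continuous_const.mul continuous_id)).aestronglyMeasurable)
      (ae_of_all _ fun x => by simpa using Real.abs_sin_le_one (t * x))
  have harg : ∀ t x : ℝ, Complex.I * t * x = ((t * x : ℝ) : ℂ) * Complex.I := by
    intro t x; push_cast; ring
  have hre : ∀ t : ℝ, (charFun' μ t).re = ∫ x, Real.cos (t * x) ∂μ := by
    intro t
    have h := integral_re (𝕜 := ℂ) (hexp_int t)
    simp only [RCLike.re_to_complex] at h
    rw [charFun', ← h]
    congr 1
    funext x
    rw [harg t x, Complex.exp_ofReal_mul_I_re]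
  have him : ∀ t : ℝ, (charFun' μ t).im = ∫ x, Real.sin (t * x) ∂μ := by
    intro t
    have h := integral_im (𝕜 := ℂ) (hexp_int t)
    simp only [RCLike.im_to_complex] at h
    rw [charFun', ← h]
    congr 1
    funext x
    rw [harg t x, Complex.exp_ofReal_mul_I_im]
  set ν : Measure ℝ := Measure.map (fun p : ℝ × ℝ => p.1 - p.2) (μ.prod μ) with hν_def
  have hmeas : Measurable fun p : ℝ × ℝ => p.1 - p.2 := measurable_fst.sub measurable_snd
  haveI : IsProbabilityMeasure ν := by
    rw [hν_def]; exact Measure.isProbabilityMeasure_map hmeas.aemeasurable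
  set F : ℝ → ℝ := fun t => ‖charFun' μ t‖ ^ 2 with hF_def
  have hFdef : ∀ t, F t = ∫ x, Real.cos (t * x) ∂ν := by
    intro t
    have hmap : ∫ x, Real.cos (t*x) ∂ν
        = ∫ p : ℝ × ℝ, Real.cos (t*(p.1 - p.2)) ∂(μ.prod μ) := by
      rw [hν_def]
      exact integral_map hmeas.aemeasurable
        ((Real.continuous_cos.comp (continuous_const.mul continuous_id)).aestronglyMeasurable)
    have hfun : (fun p : ℝ × ℝ => Real.cos (t*(p.1 - p.2)))
        = fun p : ℝ × ℝ => Real.cos (t*p.1) * Real.cos (t*p.2)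
          + Real.sin (t*p.1) * Real.sin (t*p.2) := by
      funext p; rw [mul_sub, Real.cos_sub]
    have hc := integral_prod_mul (μ := μ) (ν := μ) (f := fun x => Real.cos (t*x))
      (g := fun y => Real.cos (t*y))
    have hs := integral_prod_mul (μ := μ) (ν := μ) (f := fun x => Real.sin (t*x))
      (g := fun y => Real.sin (t*y))
    rw [hmap, hfun, integral_add ((hcosμ t).mul_prod (hcosμ t)) ((hsinμ t).mul_prod (hsinμ t)),
      hc, hs]
    rw [hF_def]
    simp only []
    rw [Complex.sq_norm, Complex.normSq_apply, hre t, him t]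
  have heqF : ∀ n : ℕ, 0 < n → ∀ t : ℝ, F t ^ n = F ((n:ℝ)^(1/α) * t) := by
    intro n hn t
    obtain ⟨b, hb⟩ := hstable n hn
    have h := congrArg (‖·‖) (hb t)
    rw [norm_mul, norm_pow] at h
    have hone : ‖Complex.exp (Complex.I * b * t)‖ = 1 := by
      rw [Complex.norm_exp]; simp
    rw [hone, mul_one] at h
    rw [hF_def]
    simp only []
    calc (‖charFun' μ t‖^2)^n = (‖charFun' μ t‖^n)^2 := by ring
      _ = _ := by rw [h]
  obtain ⟨t0, ht0⟩ := hnd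
  have hφ0 : charFun' μ 0 = 1 := by
    rw [charFun']
    simp
  have ht0ne : t0 ≠ 0 := by
    rintro rfl
    rw [hφ0] at ht0
    simp at ht0
  have hφneg : ∀ t : ℝ, ‖charFun' μ (-t)‖ = ‖charFun' μ t‖ := by
    intro t
    have hconj : charFun' μ (-t) = (starRingEnd ℂ) (charFun' μ t) := by
      rw [charFun', charFun', ← integral_conj]
      congr 1
      funext x
      rw [← Complex.exp_conj]
      congr 1
      simp only [map_mul, Complex.conj_I, Complex.conj_ofReal]
      push_cast
      ring
    rw [hconj]
    exact Complex.norm_conj _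
  have ht1pos : 0 < |t0| := abs_pos.mpr ht0ne
  have habs1 : ‖charFun' μ |t0|‖ < 1 := by
    rcases abs_choice t0 with h | h
    · rwa [h]
    · rw [h, hφneg]; exact ht0
  have hFt1 : F |t0| < 1 := by
    rw [hF_def]
    simp only []
    exact pow_lt_one₀ (norm_nonneg _) habs1 (by norm_num)
  exact core ν hcon hFdef heqF ht1pos hFt1
end
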